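/- Let M be an A-module algebra over a weak *-Hopf algebra A. Then for all m ∈ M: (i) if a ∈ A_L then a▷m = (a▷1_M)·m = (S⁻¹(a)▷1_M)·m; (ii) if a ∈ A_R then a▷m = m·(a▷1_M) = m·(S(a)▷1_M); (iii) if a ∈ A_L∩A_R then a▷1_M lies in the center of M; (iv) if a lies in the center of A then a▷1_M ∈ M_R∩M^A, and moreover every element of M_R∩M^A lies in the center of M^A. -/

import Mathlib

open scoped TensorProduct

noncomputable section

/-- The componentwise star operation on a tensor product of star algebras,
as an additive map (it is conjugate-linear, hence not a `LinearMap`). -/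
def tensorStar (A B : Type) [Ring A] [Algebra ℂ A] [StarRing A] [StarModule ℂ A]
    [Ring B] [Algebra ℂ B] [StarRing B] [StarModule ℂ B] :
    A ⊗[ℂ] B →+ A ⊗[ℂ] B :=
  TensorProduct.liftAddHom
    (AddMonoidHom.mk'
      (fun a => AddMonoidHom.mk' (fun b => star a ⊗ₜ[ℂ] star b)
        (fun x y => by
          show star a ⊗ₜ[ℂ] star (x + y) = star a ⊗ₜ[ℂ] star x + star a ⊗ₜ[ℂ] star y
          rw [star_add, TensorProduct.tmul_add]))
      (fun x y => by
        ext b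
        show star (x + y) ⊗ₜ[ℂ] star b = star x ⊗ₜ[ℂ] star b + star y ⊗ₜ[ℂ] star b
        rw [star_add, TensorProduct.add_tmul]))
    (fun r a b => by
      show star (r • a) ⊗ₜ[ℂ] star b = star a ⊗ₜ[ℂ] star (r • b)
      rw [star_smul, star_smul, TensorProduct.smul_tmul])

/-- A finite dimensional weak `*`-Hopf algebra over `ℂ` (axioms of [BNS]),
together with the derived properties of the antipode (which follow from the
axioms and are included as fields for convenience). -/
structure WeakHopfAlgebra (A : Type) [Ring A] [Algebra ℂ A] [StarRing A] [StarModule ℂ A] where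
  Δ : A →ₗ[ℂ] A ⊗[ℂ] A
  ε : A →ₗ[ℂ] ℂ
  S : A →ₗ[ℂ] A
  Sinv : A →ₗ[ℂ] A
  finite : FiniteDimensional ℂ A
  Δ_mul : ∀ x y : A, Δ (x * y) = Δ x * Δ y
  Δ_star : ∀ x : A, Δ (star x) = tensorStar A A (Δ x)
  coassoc : ∀ x : A,
    (TensorProduct.assoc ℂ A A A) ((TensorProduct.map Δ (LinearMap.id : A →ₗ[ℂ] A)) (Δ x))
      = (TensorProduct.map (LinearMap.id : A →ₗ[ℂ] A) Δ) (Δ x)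
  counit_left : ∀ x : A,
    (TensorProduct.lid ℂ A) ((TensorProduct.map ε (LinearMap.id : A →ₗ[ℂ] A)) (Δ x)) = x
  counit_right : ∀ x : A,
    (TensorProduct.rid ℂ A) ((TensorProduct.map (LinearMap.id : A →ₗ[ℂ] A) ε) (Δ x)) = x
  unit_weak :
    (Δ 1 ⊗ₜ[ℂ] (1 : A)) * ((TensorProduct.assoc ℂ A A A).symm ((1 : A) ⊗ₜ[ℂ] Δ 1))
      = (TensorProduct.map Δ (LinearMap.id : A →ₗ[ℂ] A)) (Δ 1)
  unit_weak' :
    ((TensorProduct.assoc ℂ A A A).symm ((1 : A) ⊗ₜ[ℂ] Δ 1)) * (Δ 1 ⊗ₜ[ℂ] (1 : A))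
      = (TensorProduct.map Δ (LinearMap.id : A →ₗ[ℂ] A)) (Δ 1)
  counit_weak : ∀ x y z : A,
    ε (x * y * z) = (TensorProduct.lid ℂ ℂ)
      ((TensorProduct.map (ε ∘ₗ LinearMap.mulLeft ℂ x) (ε ∘ₗ LinearMap.mulRight ℂ z)) (Δ y))
  counit_weak' : ∀ x y z : A,
    ε (x * y * z) = (TensorProduct.lid ℂ ℂ)
      ((TensorProduct.map (ε ∘ₗ LinearMap.mulRight ℂ z) (ε ∘ₗ LinearMap.mulLeft ℂ x)) (Δ y))
  antipode_left : ∀ x : A,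
    LinearMap.mul' ℂ A ((TensorProduct.map S (LinearMap.id : A →ₗ[ℂ] A)) (Δ x))
      = (TensorProduct.rid ℂ A)
          ((TensorProduct.map (LinearMap.id : A →ₗ[ℂ] A) (ε ∘ₗ LinearMap.mulLeft ℂ x)) (Δ 1))
  antipode_right : ∀ x : A,
    LinearMap.mul' ℂ A ((TensorProduct.map (LinearMap.id : A →ₗ[ℂ] A) S) (Δ x))
      = (TensorProduct.lid ℂ A)
          ((TensorProduct.map (ε ∘ₗ LinearMap.mulRight ℂ x) (LinearMap.id : A →ₗ[ℂ] A)) (Δ 1))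
  antipode_mid : ∀ x : A,
    LinearMap.mul' ℂ A
      ((TensorProduct.map (LinearMap.mul' ℂ A ∘ₗ TensorProduct.map S (LinearMap.id : A →ₗ[ℂ] A)) S)
        ((TensorProduct.map Δ (LinearMap.id : A →ₗ[ℂ] A)) (Δ x))) = S x
  S_Sinv : ∀ x : A, S (Sinv x) = x
  Sinv_S : ∀ x : A, Sinv (S x) = x
  S_antimul : ∀ x y : A, S (x * y) = S y * S x
  S_anticomul : ∀ x : A, Δ (S x) = (TensorProduct.comm ℂ A A) ((TensorProduct.map S S) (Δ x))
  S_star : ∀ x : A, star (S (star x)) = Sinv x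

/-- The set of elements commuting with everything. -/
def centerSet (R : Type) [Mul R] : Set R := {z | ∀ r : R, z * r = r * z}

namespace WeakHopfAlgebra

variable {A : Type} [Ring A] [Algebra ℂ A] [StarRing A] [StarModule ℂ A]

/-- `Σ x₍₁₎ · S(x₍₂₎)`. -/
def swIdS (W : WeakHopfAlgebra A) (x : A) : A :=
  LinearMap.mul' ℂ A ((TensorProduct.map (LinearMap.id : A →ₗ[ℂ] A) W.S) (W.Δ x))

/-- `Σ S(x₍₁₎) · x₍₂₎`. -/
def swSId (W : WeakHopfAlgebra A) (x : A) : A :=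
  LinearMap.mul' ℂ A ((TensorProduct.map W.S (LinearMap.id : A →ₗ[ℂ] A)) (W.Δ x))

/-- `Σ x₍₂₎ · S⁻¹(x₍₁₎)`. -/
def swIdSinv (W : WeakHopfAlgebra A) (x : A) : A :=
  LinearMap.mul' ℂ A
    ((TensorProduct.map (LinearMap.id : A →ₗ[ℂ] A) W.Sinv) ((TensorProduct.comm ℂ A A) (W.Δ x)))

/-- `Σ S⁻¹(x₍₂₎) · x₍₁₎`. -/
def swSinvId (W : WeakHopfAlgebra A) (x : A) : A :=
  LinearMap.mul' ℂ A
    ((TensorProduct.map W.Sinv (LinearMap.id : A →ₗ[ℂ] A)) ((TensorProduct.comm ℂ A A) (W.Δ x)))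

/-- The left subalgebra `A_L = {(φ ⊗ id)(Δ 1) : φ ∈ A*}`. -/
def AL (W : WeakHopfAlgebra A) : Set A :=
  {a | ∃ φ : A →ₗ[ℂ] ℂ,
    a = (TensorProduct.lid ℂ A) ((TensorProduct.map φ (LinearMap.id : A →ₗ[ℂ] A)) (W.Δ 1))}

/-- The right subalgebra `A_R = {(id ⊗ φ)(Δ 1) : φ ∈ A*}`. -/
def AR (W : WeakHopfAlgebra A) : Set A :=
  {a | ∃ φ : A →ₗ[ℂ] ℂ,
    a = (TensorProduct.rid ℂ A) ((TensorProduct.map (LinearMap.id : A →ₗ[ℂ] A) φ) (W.Δ 1))}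

/-- A left integral: `a · l = Σ a₍₁₎ S(a₍₂₎) · l` for all `a`. -/
def IsLeftIntegral (W : WeakHopfAlgebra A) (l : A) : Prop := ∀ a : A, a * l = W.swIdS a * l

/-- A right integral: `r · a = r · Σ S(a₍₁₎) a₍₂₎` for all `a`. -/
def IsRightIntegral (W : WeakHopfAlgebra A) (r : A) : Prop := ∀ a : A, r * a = r * W.swSId a

/-- A normalized Haar integral. -/
def IsHaar (W : WeakHopfAlgebra A) (h : A) : Prop :=
  W.IsLeftIntegral h ∧ W.IsRightIntegral h ∧ W.swSId h = 1 ∧ W.swIdS h = 1 ∧ W.S h = h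

/-- The canonical left action of a functional `λ ∈ A*` on `A`:
`λ ⇀ a = Σ a₍₁₎ · ⟨λ, a₍₂₎⟩`. -/
def lact (W : WeakHopfAlgebra A) (lam : A →ₗ[ℂ] ℂ) : A →ₗ[ℂ] A :=
  (TensorProduct.rid ℂ A).toLinearMap ∘ₗ
    (TensorProduct.map (LinearMap.id : A →ₗ[ℂ] A) lam) ∘ₗ W.Δ

/-- `λ ∈ A*` is a left integral of the dual weak Hopf algebra:
`λ ⇀ a ∈ A_L` for all `a ∈ A`. -/
def IsDualLeftIntegral (W : WeakHopfAlgebra A) (lam : A →ₗ[ℂ] ℂ) : Prop :=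
  ∀ a : A, W.lact lam a ∈ W.AL

/-- A dual pair of left integrals `(l, λ)`. -/
def IsDualPair (W : WeakHopfAlgebra A) (l : A) (lam : A →ₗ[ℂ] ℂ) : Prop :=
  W.IsLeftIntegral l ∧ W.IsDualLeftIntegral lam ∧
  W.lact lam l = 1 ∧
  (∀ a : A,
    (TensorProduct.rid ℂ A)
      ((TensorProduct.map (LinearMap.id : A →ₗ[ℂ] A) (lam ∘ₗ LinearMap.mulLeft ℂ a)) (W.Δ l))
      = W.S a) ∧
  (∀ a : A,
    (TensorProduct.lid ℂ A)
      ((TensorProduct.map (lam ∘ₗ LinearMap.mulRight ℂ a ∘ₗ W.Sinv)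
        (LinearMap.id : A →ₗ[ℂ] A)) (W.Δ l)) = a)

end WeakHopfAlgebra

/-- A (left) module `*`-algebra over a weak `*`-Hopf algebra. -/
structure ModuleAlgebra {A : Type} [Ring A] [Algebra ℂ A] [StarRing A] [StarModule ℂ A]
    (W : WeakHopfAlgebra A) (M : Type) [Ring M] [Algebra ℂ M] [StarRing M] [StarModule ℂ M] where
  act : A →ₗ[ℂ] M →ₗ[ℂ] M
  act_mul : ∀ (a b : A) (m : M), act (a * b) m = act a (act b m)
  act_one : ∀ m : M, act 1 m = m
  act_mul' : ∀ (a : A) (m n : M),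
    act a (m * n) = LinearMap.mul' ℂ M ((TensorProduct.map (act.flip m) (act.flip n)) (W.Δ a))
  act_star : ∀ (a : A) (m : M), star (act a m) = act (star (W.S a)) (star m)
  act_unit : ∀ a : A, act a 1 = act (W.swIdS a) 1

namespace ModuleAlgebra

variable {A : Type} [Ring A] [Algebra ℂ A] [StarRing A] [StarModule ℂ A]
variable {M : Type} [Ring M] [Algebra ℂ M] [StarRing M] [StarModule ℂ M]
variable {W : WeakHopfAlgebra A}

/-- `M_R = A ▷ 1_M`. -/
def MR (MA : ModuleAlgebra W M) : Set M := Set.range fun a : A => MA.act a 1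

/-- The fixed point algebra `M^A`. -/
def fixed (MA : ModuleAlgebra W M) : Set M :=
  {n | ∀ (a : A) (m : M), MA.act a (m * n) = MA.act a m * n}

end ModuleAlgebra

section Crossed

variable {A : Type} [Ring A] [Algebra ℂ A] [StarRing A] [StarModule ℂ A]
variable {M : Type} [Ring M] [Algebra ℂ M] [StarRing M] [StarModule ℂ M]
variable {W : WeakHopfAlgebra A}

/-- The subspace of `M ⊗ A` by which one divides to form the crossed product
`M ⋊ A = M ⊗_{A_L} A`. -/
def crossedRel (MA : ModuleAlgebra W M) : Submodule ℂ (M ⊗[ℂ] A) :=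
  Submodule.span ℂ
    {x | ∃ (m : M) (a b : A), b ∈ W.AL ∧
      x = (m * MA.act b 1) ⊗ₜ[ℂ] a - m ⊗ₜ[ℂ] (b * a)}

/-- The crossed product `M ⋊ A` as a vector space. -/
abbrev Crossed (MA : ModuleAlgebra W M) : Type := (M ⊗[ℂ] A) ⧸ crossedRel MA

/-- The canonical projection `M ⊗ A → M ⋊ A`; `cmk MA (m ⊗ₜ a)` is `m ⋊ a`. -/
def cmk (MA : ModuleAlgebra W M) : M ⊗[ℂ] A →ₗ[ℂ] Crossed MA := (crossedRel MA).mkQ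

/-- The embedding `M → M ⋊ A`, `m ↦ m ⋊ 1`. -/
def iM (MA : ModuleAlgebra W M) : M →ₗ[ℂ] Crossed MA :=
  cmk MA ∘ₗ (TensorProduct.mk ℂ M A).flip (1 : A)

/-- The map `A → M ⋊ A`, `a ↦ 1 ⋊ a`. -/
def iA (MA : ModuleAlgebra W M) : A →ₗ[ℂ] Crossed MA :=
  cmk MA ∘ₗ (TensorProduct.mk ℂ M A) (1 : M)

/-- The unit `1 ⋊ 1` of `M ⋊ A`. -/
def oneC (MA : ModuleAlgebra W M) : Crossed MA := cmk MA ((1 : M) ⊗ₜ[ℂ] (1 : A))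

/-- The multiplication of the crossed product `M ⋊ A`
(whose existence is the content of Theorem 3.1), as a bundled bilinear map
together with its defining formula on generators:
`(m ⋊ a)(m' ⋊ a') = Σ m (a₍₁₎ ▷ m') ⋊ a₍₂₎ a'`. -/
structure CrossedMul (MA : ModuleAlgebra W M) where
  mul : Crossed MA →ₗ[ℂ] Crossed MA →ₗ[ℂ] Crossed MA
  mul_def : ∀ (m m' : M) (a a' : A),
    mul (cmk MA (m ⊗ₜ[ℂ] a)) (cmk MA (m' ⊗ₜ[ℂ] a'))
      = cmk MA ((TensorProduct.map ((LinearMap.mulLeft ℂ m) ∘ₗ (MA.act.flip m'))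
          (LinearMap.mulRight ℂ a')) (W.Δ a))

/-- The star operation of the crossed product `M ⋊ A`
(whose existence is part of Theorem 3.1):
`(m ⋊ a)* = Σ (a₍₁₎* ▷ m*) ⋊ a₍₂₎*`. -/
structure CrossedStar (MA : ModuleAlgebra W M) where
  st : Crossed MA →+ Crossed MA
  st_smul : ∀ (c : ℂ) (x : Crossed MA), st (c • x) = (starRingEnd ℂ c) • st x
  st_def : ∀ (m : M) (a : A),
    st (cmk MA (m ⊗ₜ[ℂ] a))
      = cmk MA ((TensorProduct.map (MA.act.flip (star m)) (LinearMap.id : A →ₗ[ℂ] A))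
          (W.Δ (star a)))

/-- The multiplication on `(M ⋊ A) ⊗ B` induced by a crossed product
multiplication on `M ⋊ A` and the algebra structure of `B`. -/
def mulT (MA : ModuleAlgebra W M) (CS : CrossedMul MA) (B : Type) [Ring B] [Algebra ℂ B] :
    Crossed MA ⊗[ℂ] B →ₗ[ℂ] Crossed MA ⊗[ℂ] B →ₗ[ℂ] Crossed MA ⊗[ℂ] B :=
  TensorProduct.lift
    ((TensorProduct.mapBilinear (RingHom.id ℂ) (Crossed MA) B (Crossed MA) B).compl₁₂ CS.mul
      (LinearMap.mul ℂ B))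

end Crossed


/-! Elements `y ∈ A_L` and `z ∈ A_R` have coproducts `Δ y = Δ 1 · (y ⊗ 1)` and
`Δ z = Δ 1 · (1 ⊗ z) = (1 ⊗ z) · Δ 1`, which are read off from the weak unit axiom after
slicing `(Δ ⊗ id) Δ 1` with the functional defining `y` or `z`. Hence the module algebra rule gives
`y ▷ m = y ▷ (1 · m) = (1₍₁₎ ▷ (y ▷ 1))(1₍₂₎ ▷ m) = 1 ▷ ((y ▷ 1) m)`, and symmetrically on the
right.

For `z ∈ A_R` the unit rule `z ▷ 1 = z₍₁₎ S(z₍₂₎) ▷ 1` becomes `1₍₁₎ S(1₍₂₎) S(z) ▷ 1 = S(z) ▷ 1`,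
and `S⁻¹` maps `A_L` into `A_R`; this gives the second formulas in (i) and (ii).

For central `a`, the target map identity `b₍₁₎ ⊗ b₍₂₎ S(b₍₃₎) = 1₍₁₎ b ⊗ 1₍₂₎` turns
`b ▷ (m (a ▷ 1)) = (b₍₁₎ ▷ m)(a b₍₂₎ S(b₍₃₎) ▷ 1)` into `(b ▷ m)(a ▷ 1)`. Finally every
`c ▷ 1 ∈ M_R` equals `z ▷ 1` for `z = S⁻¹(c₍₁₎ S(c₍₂₎)) ∈ A_R`, so for a fixed point `n`,
`n (c ▷ 1) = z ▷ n = (z ▷ 1) n = (c ▷ 1) n`. -/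

namespace TensorProduct

variable {R A B C M N P : Type*} [CommSemiring R]

section Naturality

variable [AddCommMonoid M] [AddCommMonoid N] [AddCommMonoid P] [Module R M] [Module R N]
  [Module R P]

lemma apply_lid_map_id (φ : M →ₗ[R] R) (f : N →ₗ[R] P) (t : M ⊗[R] N) :
    f (TensorProduct.lid R N (map φ LinearMap.id t))
      = TensorProduct.lid R P (map φ LinearMap.id (map LinearMap.id f t)) := by
  simpa [map_map] using (LinearMap.congr_fun (CoassocSimps.lid_comp_map φ f) t).symm

lemma apply_rid_map_id (φ : N →ₗ[R] R) (f : M →ₗ[R] P) (t : M ⊗[R] N) :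
    f (TensorProduct.rid R M (map LinearMap.id φ t))
      = TensorProduct.rid R P (map LinearMap.id φ (map f LinearMap.id t)) := by
  simpa [map_map] using (LinearMap.congr_fun (CoassocSimps.rid_comp_map f φ) t).symm

end Naturality

variable [Semiring A] [Semiring B] [Semiring C] [Algebra R A] [Algebra R B] [Algebra R C]

lemma map_id_mul_of_map_mul (f : A →ₗ[R] B) (hf : ∀ x y, f (x * y) = f x * f y)
    (u v : A ⊗[R] C) :
    map f LinearMap.id (u * v) = map f LinearMap.id u * map f LinearMap.id v := by
  induction u using TensorProduct.induction_on with
  | zero => simp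
  | add x y hx hy => simp only [add_mul, map_add, hx, hy]
  | tmul a c =>
    induction v using TensorProduct.induction_on with
    | zero => simp
    | add x y hx hy => simp only [mul_add, map_add, hx, hy]
    | tmul a' c' => simp [Algebra.TensorProduct.tmul_mul_tmul, hf]

lemma lid_map_assoc_mul (φ : A →ₗ[R] R) (u v : A ⊗[R] A) :
    TensorProduct.lid R (A ⊗[R] A) (map φ LinearMap.id
      (TensorProduct.assoc R A A A ((TensorProduct.assoc R A A A).symm (1 ⊗ₜ u) * (v ⊗ₜ 1))))
      = u * (TensorProduct.lid R A (map φ LinearMap.id v) ⊗ₜ 1) := by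
  induction u using TensorProduct.induction_on with
  | zero => simp
  | add x y hx hy => simp only [tmul_add, map_add, add_mul, hx, hy]
  | tmul e f =>
    induction v using TensorProduct.induction_on with
    | zero => simp
    | add x y hx hy => simp only [add_tmul, map_add, mul_add, hx, hy]
    | tmul a b => simp [Algebra.TensorProduct.tmul_mul_tmul, smul_tmul']

lemma rid_map_mul_assoc (φ : A →ₗ[R] R) (u v : A ⊗[R] A) :
    TensorProduct.rid R (A ⊗[R] A) (map LinearMap.id φ
      ((v ⊗ₜ 1) * (TensorProduct.assoc R A A A).symm (1 ⊗ₜ u)))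
      = v * (1 ⊗ₜ TensorProduct.rid R A (map LinearMap.id φ u)) := by
  induction u using TensorProduct.induction_on with
  | zero => simp
  | add x y hx hy => simp only [tmul_add, map_add, mul_add, hx, hy]
  | tmul e f =>
    induction v using TensorProduct.induction_on with
    | zero => simp
    | add x y hx hy => simp only [add_tmul, map_add, add_mul, hx, hy]
    | tmul a b => simp [Algebra.TensorProduct.tmul_mul_tmul, smul_tmul']

lemma rid_map_assoc_mul (φ : A →ₗ[R] R) (u v : A ⊗[R] A) :
    TensorProduct.rid R (A ⊗[R] A) (map LinearMap.id φ
      ((TensorProduct.assoc R A A A).symm (1 ⊗ₜ u) * (v ⊗ₜ 1)))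
      = (1 ⊗ₜ TensorProduct.rid R A (map LinearMap.id φ u)) * v := by
  induction u using TensorProduct.induction_on with
  | zero => simp
  | add x y hx hy => simp only [tmul_add, map_add, add_mul, hx, hy]
  | tmul e f =>
    induction v using TensorProduct.induction_on with
    | zero => simp
    | add x y hx hy => simp only [add_tmul, map_add, mul_add, hx, hy]
    | tmul a b => simp [Algebra.TensorProduct.tmul_mul_tmul, smul_tmul']

end TensorProduct

namespace WeakHopfAlgebra

open TensorProduct

variable {A : Type} [Ring A] [Algebra ℂ A] [StarRing A] [StarModule ℂ A] (W : WeakHopfAlgebra A)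

lemma S_one : W.S 1 = 1 :=
  calc W.S 1 = W.S 1 * W.S (W.Sinv 1) := by rw [W.S_Sinv, mul_one]
    _ = 1 := by rw [← W.S_antimul, mul_one, W.S_Sinv]

lemma swIdS_one : W.swIdS 1 = 1 := by
  have h : W.ε ∘ₗ LinearMap.mulRight ℂ (1 : A) = W.ε := by ext; simp
  rw [swIdS, W.antipode_right, h, W.counit_left]

lemma swIdS_mem_AL (x : A) : W.swIdS x ∈ W.AL :=
  ⟨W.ε ∘ₗ LinearMap.mulRight ℂ x, W.antipode_right x⟩

lemma Sinv_mem_AR_of_mem_AL {y : A} (hy : y ∈ W.AL) : W.Sinv y ∈ W.AR := by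
  obtain ⟨φ, rfl⟩ := hy
  refine ⟨φ ∘ₗ W.S, ?_⟩
  have key : ∀ t : A ⊗[ℂ] A,
      W.Sinv (TensorProduct.lid ℂ A (map φ LinearMap.id (TensorProduct.comm ℂ A A (map W.S W.S t))))
        = TensorProduct.rid ℂ A (map LinearMap.id (φ ∘ₗ W.S) t) := by
    intro t
    induction t using TensorProduct.induction_on with
    | zero => simp
    | tmul a b => simp [W.Sinv_S]
    | add x y hx hy => simp only [map_add, hx, hy]
  rw [← key, ← W.S_anticomul, S_one]

lemma Δ_of_mem_AL {y : A} (hy : y ∈ W.AL) : W.Δ y = W.Δ 1 * (y ⊗ₜ 1) := by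
  obtain ⟨φ, rfl⟩ := hy
  rw [apply_lid_map_id, ← W.coassoc, ← W.unit_weak', lid_map_assoc_mul]

lemma Δ_of_mem_AR {z : A} (hz : z ∈ W.AR) : W.Δ z = W.Δ 1 * (1 ⊗ₜ z) := by
  obtain ⟨φ, rfl⟩ := hz
  rw [apply_rid_map_id, ← W.unit_weak, rid_map_mul_assoc]

lemma Δ_of_mem_AR' {z : A} (hz : z ∈ W.AR) : W.Δ z = (1 ⊗ₜ z) * W.Δ 1 := by
  obtain ⟨φ, rfl⟩ := hz
  rw [apply_rid_map_id, ← W.unit_weak', rid_map_assoc_mul]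

lemma swIdS_of_mem_AR {z : A} (hz : z ∈ W.AR) : W.swIdS z = W.S z := by
  have key : ∀ t : A ⊗[ℂ] A, LinearMap.mul' ℂ A (map LinearMap.id W.S ((1 ⊗ₜ z) * t))
      = LinearMap.mul' ℂ A (map LinearMap.id W.S t) * W.S z := by
    intro t
    induction t using TensorProduct.induction_on with
    | zero => simp
    | tmul a b => simp [Algebra.TensorProduct.tmul_mul_tmul, W.S_antimul, mul_assoc]
    | add x y hx hy => simp only [mul_add, map_add, hx, hy, add_mul]
  rw [swIdS, Δ_of_mem_AR' W hz, key, ← swIdS, swIdS_one, one_mul]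

/-- The target counital map `ε_t`. -/
def targetMap : A →ₗ[ℂ] A := LinearMap.mul' ℂ A ∘ₗ map LinearMap.id W.S ∘ₗ W.Δ

lemma targetMap_apply (x : A) : W.targetMap x = W.swIdS x := rfl

abbrev counitMid : (A ⊗[ℂ] A) ⊗[ℂ] A →ₗ[ℂ] A ⊗[ℂ] A :=
  map ((TensorProduct.rid ℂ A).toLinearMap ∘ₗ map LinearMap.id W.ε) LinearMap.id

lemma counitMid_map_Δ_id (t : A ⊗[ℂ] A) : W.counitMid (map W.Δ LinearMap.id t) = t := by
  have h : (TensorProduct.rid ℂ A).toLinearMap ∘ₗ map LinearMap.id W.ε ∘ₗ W.Δ = LinearMap.id :=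
    LinearMap.ext W.counit_right
  rw [counitMid, ← LinearMap.comp_apply, ← map_comp, LinearMap.comp_assoc, h, LinearMap.id_comp,
    map_id, LinearMap.id_apply]

lemma counitMid_assoc_mul (t : A ⊗[ℂ] A) :
    W.counitMid ((TensorProduct.assoc ℂ A A A).symm (1 ⊗ₜ W.Δ 1) * (t ⊗ₜ 1))
      = map LinearMap.id W.targetMap t := by
  induction t using TensorProduct.induction_on with
  | zero => simp
  | add x y hx hy => simp only [add_tmul, mul_add, map_add, hx, hy]
  | tmul a c =>
    rw [map_tmul, LinearMap.id_apply, targetMap_apply, swIdS, W.antipode_right]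
    generalize W.Δ 1 = u
    induction u using TensorProduct.induction_on with
    | zero => simp
    | add x y hx hy => simp only [tmul_add, map_add, add_mul, hx, hy]
    | tmul e f => simp [Algebra.TensorProduct.tmul_mul_tmul, smul_tmul']

lemma map_id_targetMap_Δ (b : A) :
    map LinearMap.id W.targetMap (W.Δ b) = W.Δ 1 * (b ⊗ₜ 1) := by
  have h : (TensorProduct.assoc ℂ A A A).symm (1 ⊗ₜ W.Δ 1) * (W.Δ b ⊗ₜ 1)
      = map W.Δ LinearMap.id (W.Δ 1 * (b ⊗ₜ 1)) := by
    rw [map_id_mul_of_map_mul W.Δ W.Δ_mul, ← W.unit_weak', map_tmul, LinearMap.id_apply,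
      mul_assoc, Algebra.TensorProduct.tmul_mul_tmul, ← W.Δ_mul, one_mul, one_mul]
  rw [← counitMid_assoc_mul, h, counitMid_map_Δ_id]

end WeakHopfAlgebra

namespace ModuleAlgebra

open TensorProduct WeakHopfAlgebra

variable {A : Type} [Ring A] [Algebra ℂ A] [StarRing A] [StarModule ℂ A]
variable {M : Type} [Ring M] [Algebra ℂ M] [StarRing M] [StarModule ℂ M]
variable {W : WeakHopfAlgebra A} (MA : ModuleAlgebra W M)

def pairing (m n : M) : A ⊗[ℂ] A →ₗ[ℂ] M :=
  LinearMap.mul' ℂ M ∘ₗ map (MA.act.flip m) (MA.act.flip n)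

@[simp]
lemma pairing_tmul (m n : M) (x y : A) : MA.pairing m n (x ⊗ₜ y) = MA.act x m * MA.act y n :=
  rfl

lemma act_mul_eq_pairing (a : A) (m n : M) : MA.act a (m * n) = MA.pairing m n (W.Δ a) :=
  MA.act_mul' a m n

lemma pairing_Δ_one (m n : M) : MA.pairing m n (W.Δ 1) = m * n := by
  rw [← act_mul_eq_pairing, MA.act_one]

lemma pairing_mul_tmul_one (m n : M) (x : A) (t : A ⊗[ℂ] A) :
    MA.pairing m n (t * (x ⊗ₜ 1)) = MA.pairing (MA.act x m) n t := by
  induction t using TensorProduct.induction_on with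
  | zero => simp
  | add u v hu hv => simp only [add_mul, map_add, hu, hv]
  | tmul a c => simp [Algebra.TensorProduct.tmul_mul_tmul, MA.act_mul]

lemma pairing_mul_one_tmul (m n : M) (x : A) (t : A ⊗[ℂ] A) :
    MA.pairing m n (t * (1 ⊗ₜ x)) = MA.pairing m (MA.act x n) t := by
  induction t using TensorProduct.induction_on with
  | zero => simp
  | add u v hu hv => simp only [add_mul, map_add, hu, hv]
  | tmul a c => simp [Algebra.TensorProduct.tmul_mul_tmul, MA.act_mul]

lemma pairing_map_id_of_act_eq (m n : M) {f : A →ₗ[ℂ] A} (hf : ∀ y, MA.act (f y) n = MA.act y n)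
    (t : A ⊗[ℂ] A) : MA.pairing m n (map LinearMap.id f t) = MA.pairing m n t := by
  induction t using TensorProduct.induction_on with
  | zero => simp
  | add u v hu hv => simp only [map_add, hu, hv]
  | tmul a c => simp [hf]

lemma act_of_mem_AL {y : A} (hy : y ∈ W.AL) (m : M) : MA.act y m = MA.act y 1 * m := by
  rw [← one_mul m, act_mul_eq_pairing, W.Δ_of_mem_AL hy, pairing_mul_tmul_one, pairing_Δ_one,
    one_mul]

lemma act_of_mem_AR {z : A} (hz : z ∈ W.AR) (m : M) : MA.act z m = m * MA.act z 1 := by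
  rw [← mul_one m, act_mul_eq_pairing, W.Δ_of_mem_AR hz, pairing_mul_one_tmul, pairing_Δ_one,
    mul_one]

lemma act_S_one_of_mem_AR {z : A} (hz : z ∈ W.AR) : MA.act (W.S z) 1 = MA.act z 1 := by
  rw [MA.act_unit z, W.swIdS_of_mem_AR hz]

lemma act_Sinv_one_of_mem_AL {y : A} (hy : y ∈ W.AL) : MA.act (W.Sinv y) 1 = MA.act y 1 := by
  rw [← MA.act_S_one_of_mem_AR (W.Sinv_mem_AR_of_mem_AL hy), W.S_Sinv]

lemma act_targetMap_act_one_of_mem_center {a : A} (ha : a ∈ centerSet A) (y : A) :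
    MA.act (W.targetMap y) (MA.act a 1) = MA.act y (MA.act a 1) := by
  rw [← MA.act_mul, ← ha, MA.act_mul, targetMap_apply, ← MA.act_unit, ← MA.act_mul, ha,
    MA.act_mul]

lemma act_one_mem_fixed_of_mem_center {a : A} (ha : a ∈ centerSet A) : MA.act a 1 ∈ MA.fixed := by
  intro b m
  rw [act_mul_eq_pairing,
    ← MA.pairing_map_id_of_act_eq m _ (MA.act_targetMap_act_one_of_mem_center ha),
    W.map_id_targetMap_Δ, pairing_mul_tmul_one, pairing_Δ_one]

lemma commute_of_mem_MR_of_mem_fixed {x n : M} (hx : x ∈ MA.MR) (hn : n ∈ MA.fixed) :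
    x * n = n * x := by
  obtain ⟨c, rfl⟩ := hx
  have hz : W.Sinv (W.swIdS c) ∈ W.AR := W.Sinv_mem_AR_of_mem_AL (W.swIdS_mem_AL c)
  have hz1 : MA.act (W.Sinv (W.swIdS c)) 1 = MA.act c 1 := by
    rw [MA.act_Sinv_one_of_mem_AL (W.swIdS_mem_AL c), ← MA.act_unit]
  calc MA.act c 1 * n = MA.act (W.Sinv (W.swIdS c)) (1 * n) := by rw [hn, hz1]
    _ = n * MA.act c 1 := by rw [one_mul, MA.act_of_mem_AR hz, hz1]

end ModuleAlgebra

/-- Lemma 2.16 of [NSW]: the actions of `A_L` and `A_R` on a module algebra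
are inner: (i) for `a ∈ A_L`, `a ▷ m = (a ▷ 1)·m = (S⁻¹(a) ▷ 1)·m`;
(ii) for `a ∈ A_R`, `a ▷ m = m·(a ▷ 1) = m·(S(a) ▷ 1)`;
(iii) for `a ∈ A_L ∩ A_R`, `a ▷ 1` is central in `M`;
(iv) for central `a ∈ A`, `a ▷ 1 ∈ M_R ∩ M^A`, and every element of
`M_R ∩ M^A` lies in the center of `M^A`. -/
theorem inner_actions_of_left_right_subalgebras
    {A M : Type} [Ring A] [Algebra ℂ A] [StarRing A] [StarModule ℂ A]
    [Ring M] [Algebra ℂ M] [StarRing M] [StarModule ℂ M]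
    (W : WeakHopfAlgebra A) (MA : ModuleAlgebra W M) :
    (∀ a ∈ W.AL, ∀ m : M,
      MA.act a m = MA.act a 1 * m ∧ MA.act a m = MA.act (W.Sinv a) 1 * m)
    ∧ (∀ a ∈ W.AR, ∀ m : M,
      MA.act a m = m * MA.act a 1 ∧ MA.act a m = m * MA.act (W.S a) 1)
    ∧ (∀ a ∈ W.AL ∩ W.AR, MA.act a 1 ∈ centerSet M)
    ∧ (∀ a ∈ centerSet A, MA.act a 1 ∈ MA.MR ∩ MA.fixed)
    ∧ (∀ x ∈ MA.MR ∩ MA.fixed, ∀ n ∈ MA.fixed, x * n = n * x) := by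
  refine ⟨fun a ha m => ?_, fun a ha m => ?_, fun a ha r => ?_, fun a ha => ?_,
    fun x hx n hn => MA.commute_of_mem_MR_of_mem_fixed hx.1 hn⟩
  · rw [MA.act_Sinv_one_of_mem_AL ha]
    exact ⟨MA.act_of_mem_AL ha m, MA.act_of_mem_AL ha m⟩
  · rw [MA.act_S_one_of_mem_AR ha]
    exact ⟨MA.act_of_mem_AR ha m, MA.act_of_mem_AR ha m⟩
  · rw [← MA.act_of_mem_AL ha.1, MA.act_of_mem_AR ha.2]
  · exact ⟨⟨a, rfl⟩, MA.act_one_mem_fixed_of_mem_center ha⟩
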